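/- arXiv:1007.0695 — 3 statements merged into one kernel-verified Lean document; each statement's English description precedes it below -/
import Mathlib

section
/- The Farey tree Σ is a tree: it is connected and contains no cycles. In particular, any two Farey triangles are joined in Σ by a unique simple path. -/
/-- A Farey vertex is an element of `ℚ ∪ {∞}`; `none` represents `∞`. -/
abbrev FareyVertex := Option ℚ

/-- The numerator of the reduced form `a/b` (with `b ≥ 0`) of a Farey vertex; `∞ = 1/0`. -/
def fnum : FareyVertex → ℤ
  | none => 1
  | some r => r.num

/-- The denominator of the reduced form `a/b` (with `b ≥ 0`) of a Farey vertex; `∞ = 1/0`. -/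
def fden : FareyVertex → ℤ
  | none => 0
  | some r => (r.den : ℤ)

/-- Two Farey vertices with reduced forms `a/b` and `c/d` are Farey-neighbors if `|ad - bc| = 1`. -/
def FareyNeighbor (x y : FareyVertex) : Prop :=
  |fnum x * fden y - fden x * fnum y| = 1

/-- A Farey triangle: a set of three distinct pairwise Farey-neighbor Farey vertices. -/
@[ext]
structure FareyTriangle where
  verts : Finset FareyVertex
  card_eq : verts.card = 3
  neighbors : ∀ x ∈ verts, ∀ y ∈ verts, x ≠ y → FareyNeighbor x y

/-- The Farey tree `Σ`: vertices are the Farey triangles, two triangles being adjacent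
if and only if their intersection has exactly two elements. -/
def fareyTree : SimpleGraph FareyTriangle where
  Adj T T' := (T.verts ∩ T'.verts).card = 2
  symm := by
    constructor
    intro T T' h
    rwa [Finset.inter_comm]
  loopless := by
    constructor
    intro T h
    rw [Finset.inter_self, T.card_eq] at h
    omega

/-- The Farey vertex represented by the (not necessarily reduced) fraction `a/b`,
with the conventions `a/b = (-a)/(-b)` and `x/0 = ∞`. -/
def mkFarey (a b : ℤ) : FareyVertex :=
  if b = 0 then none else some ((a : ℚ) / (b : ℚ))

lemma neighbor_int_succ (i : ℤ) :
    FareyNeighbor (some (i : ℚ)) (some ((i + 1 : ℤ) : ℚ)) := by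
  have hn : (((i + 1 : ℤ) : ℚ)).num = i + 1 := Rat.num_intCast _
  have hd : (((i + 1 : ℤ) : ℚ)).den = 1 := Rat.den_intCast _
  simp only [FareyNeighbor, fnum, fden, hn, hd, Rat.num_intCast, Rat.den_intCast]
  simp

lemma neighbor_int_inf (i : ℤ) : FareyNeighbor (some (i : ℚ)) none := by
  simp [FareyNeighbor, fnum, fden]

lemma neighbor_symm {x y : FareyVertex} (h : FareyNeighbor x y) : FareyNeighbor y x := by
  unfold FareyNeighbor at h ⊢
  rw [← abs_neg]
  convert h using 2
  ring

/-- `△⁽ⁱ⁾`: the Farey triangle with vertices `i`, `i+1` and `∞`. -/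
def stdTriangle (i : ℤ) : FareyTriangle where
  verts := {some (i : ℚ), some ((i + 1 : ℤ) : ℚ), none}
  card_eq := by
    have h1 : (some (i : ℚ) : FareyVertex) ≠ some ((i + 1 : ℤ) : ℚ) := by
      simp only [ne_eq, Option.some.injEq]
      intro h
      have : (i : ℚ) = (i : ℚ) + 1 := by push_cast at h ⊢; linarith
      linarith
    simp [Finset.card_insert_of_notMem, h1]
  neighbors := by
    intro x hx y hy hxy
    have h1 := neighbor_int_succ i
    have h2 := neighbor_int_inf i
    have h3 := neighbor_int_inf (i + 1)
    simp only [Finset.mem_insert, Finset.mem_singleton] at hx hy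
    rcases hx with rfl | rfl | rfl <;> rcases hy with rfl | rfl | rfl <;>
      first
        | exact absurd rfl hxy
        | assumption
        | exact neighbor_symm h1
        | exact neighbor_symm h2
        | exact neighbor_symm h3

/-- `S p q` is the sum of the partial quotients in the expansion of `p/q`
as a regular continued fraction (for coprime `p ≥ 0`, `q ≥ 1`), with `S 0 1 = 0`. -/
def S (p q : ℕ) : ℕ :=
  if h : q = 0 then 0
  else p / q + S q (p % q)
termination_by q
decreasing_by exact Nat.mod_lt p (Nat.pos_of_ne_zero h)



/-! Weight a Farey vertex `a/b` by `|a| + b` and a Farey triangle by the total weight of its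
vertices. The two triangles on an edge `{a/b, c/d}` have third vertices `(a+c)/(b+d)` and
`(a-c)/(b-d)`, so the neighbours of a triangle are obtained by flipping one of its vertices
into the other common neighbour of the remaining two. A triangle containing `∞` is
`{i, i+1, ∞}`; any other one is `{x, y, x ⊕ y}` with `x, y` of positive denominator and
numerators of the same sign, and flipping the mediant `x ⊕ y` lowers the weight. So every
triangle except `{0, 1, ∞}` and `{-1, 0, ∞}` has a strictly lighter neighbour, which gives
connectedness. Conversely, a flip that does not increase the weight must flip the strictly
heaviest vertex, so every triangle has at most one neighbour that is not heavier; the heaviest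
triangle on a cycle would have two. -/

namespace SimpleGraph

variable {V : Type*} (G : SimpleGraph V)

theorem reachable_of_forall_reachable_or_exists_adj_lt (f : V → ℕ) (r : V)
    (h : ∀ v, G.Reachable v r ∨ ∃ w, G.Adj v w ∧ f w < f v) (v : V) : G.Reachable v r := by
  obtain hv | ⟨w, hvw, hw⟩ := h v
  · exact hv
  · exact hvw.reachable.trans (reachable_of_forall_reachable_or_exists_adj_lt f r h w)
termination_by f v

/-- On a cycle, the vertex of largest weight has two distinct neighbours of no larger weight. -/
theorem isAcyclic_of_unique_adj_le {α : Type*} [LinearOrder α] (f : V → α)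
    (h : ∀ ⦃v w₁ w₂⦄, G.Adj v w₁ → G.Adj v w₂ → f w₁ ≤ f v → f w₂ ≤ f v → w₁ = w₂) :
    G.IsAcyclic := by
  classical
  intro v c hc
  obtain ⟨u, hu, hmax⟩ := c.support.toFinset.exists_max_image f ⟨v, by simp⟩
  rw [List.mem_toFinset] at hu
  have hc' := hc.rotate hu
  have hle : ∀ i, f ((c.rotate u hu).getVert i) ≤ f u := fun i =>
    hmax _ <| List.mem_toFinset.mpr <|
      (c.mem_support_rotate_iff u hu).mp ((c.rotate u hu).getVert_mem_support i)
  exact hc'.snd_ne_penultimate <| h (Walk.adj_snd hc'.not_nil)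
    (Walk.adj_penultimate hc'.not_nil).symm (hle 1) (hle _)

end SimpleGraph

lemma fden_nonneg (v : FareyVertex) : 0 ≤ fden v := by
  cases v <;> simp [fden]

lemma eq_none_of_fden_eq_zero {v : FareyVertex} (h : fden v = 0) : v = none := by
  cases v with
  | none => rfl
  | some r => exact absurd h (by simp [fden])

@[simp] lemma fnum_none : fnum none = 1 := rfl

@[simp] lemma fden_none : fden none = 0 := rfl

lemma fden_pos_of_ne_none {v : FareyVertex} (h : v ≠ none) : 0 < fden v :=
  (fden_nonneg v).lt_of_ne' fun h0 => h (eq_none_of_fden_eq_zero h0)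

lemma mkFarey_fnum_fden (v : FareyVertex) : mkFarey (fnum v) (fden v) = v := by
  cases v with
  | none => rfl
  | some r => simp [mkFarey, fnum, fden, Rat.num_div_den]

lemma mkFarey_neg (p q : ℤ) : mkFarey (-p) (-q) = mkFarey p q := by
  unfold mkFarey
  split_ifs <;> first | rfl | omega | simp [neg_div_neg_eq]

lemma isCoprime_of_abs_mul_sub_mul_eq_one {p q r s : ℤ} (h : |p * s - q * r| = 1) :
    IsCoprime p q := by
  rcases abs_eq (zero_le_one' ℤ) |>.mp h with h | h
  · exact ⟨s, -r, by linarith⟩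
  · exact ⟨-s, r, by linarith⟩

lemma fnum_fden_mkFarey {p q : ℤ} (h : IsCoprime p q) :
    (fnum (mkFarey p q) = p ∧ fden (mkFarey p q) = q) ∨
      (fnum (mkFarey p q) = -p ∧ fden (mkFarey p q) = -q) := by
  have key : ∀ {p q : ℤ}, IsCoprime p q → 0 < q →
      fnum (mkFarey p q) = p ∧ fden (mkFarey p q) = q := by
    intro p q h hq
    have hcop : Nat.Coprime p.natAbs q.natAbs := Int.isCoprime_iff_gcd_eq_one.mp h
    simp only [mkFarey, hq.ne', if_false, fnum, fden]
    exact ⟨Rat.num_div_eq_of_coprime hq hcop, by exact_mod_cast Rat.den_div_eq_of_coprime hq hcop⟩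
  rcases lt_trichotomy q 0 with hq | rfl | hq
  · right
    rw [← mkFarey_neg]
    simpa using key h.neg_neg (neg_pos.mpr hq)
  · rcases Int.isUnit_iff.mp (isCoprime_zero_right.mp h) with rfl | rfl <;>
      simp [mkFarey]
  · exact Or.inl (key h hq)

def vertexWeight (v : FareyVertex) : ℕ := (fnum v).natAbs + (fden v).natAbs

lemma vertexWeight_mkFarey {p q : ℤ} (h : IsCoprime p q) :
    vertexWeight (mkFarey p q) = p.natAbs + q.natAbs := by
  rcases fnum_fden_mkFarey h with ⟨hp, hq⟩ | ⟨hp, hq⟩ <;> simp [vertexWeight, hp, hq]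

lemma fareyNeighbor_mkFarey_iff {p q : ℤ} (h : IsCoprime p q) {v : FareyVertex} :
    FareyNeighbor v (mkFarey p q) ↔ |fnum v * q - fden v * p| = 1 := by
  unfold FareyNeighbor
  rcases fnum_fden_mkFarey h with ⟨hp, hq⟩ | ⟨hp, hq⟩
  · rw [hp, hq]
  · rw [hp, hq, ← abs_neg]; ring_nf

lemma FareyNeighbor.ne {x y : FareyVertex} (h : FareyNeighbor x y) : x ≠ y := by
  rintro rfl
  simp [FareyNeighbor, mul_comm] at h

lemma exists_eq_intCast_of_fareyNeighbor_none {v : FareyVertex} (h : FareyNeighbor v none) :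
    ∃ n : ℤ, v = some (n : ℚ) := by
  have hden : fden v = 1 := by
    have := fden_nonneg v
    rw [FareyNeighbor, fnum_none, fden_none, abs_eq (zero_le_one' ℤ)] at h
    omega
  cases v with
  | none => simp [fden] at hden
  | some r => exact ⟨r.num, by simp [fden] at hden; simp [Rat.coe_int_num_of_den_eq_one hden]⟩

lemma fareyNeighbor_intCast_iff {m n : ℤ} :
    FareyNeighbor (some (m : ℚ)) (some (n : ℚ)) ↔ |m - n| = 1 := by
  simp [FareyNeighbor, fnum, fden]

section

def mediant (x y : FareyVertex) : FareyVertex := mkFarey (fnum x + fnum y) (fden x + fden y)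

/-- `(a - c)/(b - d)`: besides the mediant, the other common Farey-neighbour of `a/b` and `c/d`. -/
def antimediant (x y : FareyVertex) : FareyVertex := mkFarey (fnum x - fnum y) (fden x - fden y)

variable {x y : FareyVertex}

lemma mediant_comm (x y : FareyVertex) : mediant x y = mediant y x := by
  rw [mediant, mediant, add_comm (fnum x), add_comm (fden x)]

lemma antimediant_comm (x y : FareyVertex) : antimediant x y = antimediant y x := by
  rw [antimediant, antimediant, ← mkFarey_neg, neg_sub, neg_sub]

lemma isCoprime_add_of_fareyNeighbor (h : FareyNeighbor x y) :
    IsCoprime (fnum x + fnum y) (fden x + fden y) :=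
  isCoprime_of_abs_mul_sub_mul_eq_one (r := fnum y) (s := fden y) <| by
    unfold FareyNeighbor at h; convert h using 2; ring

lemma isCoprime_sub_of_fareyNeighbor (h : FareyNeighbor x y) :
    IsCoprime (fnum x - fnum y) (fden x - fden y) :=
  isCoprime_of_abs_mul_sub_mul_eq_one (r := fnum y) (s := fden y) <| by
    unfold FareyNeighbor at h; convert h using 2; ring

lemma fareyNeighbor_antimediant_left (h : FareyNeighbor x y) :
    FareyNeighbor x (antimediant x y) := by
  rw [antimediant, fareyNeighbor_mkFarey_iff (isCoprime_sub_of_fareyNeighbor h), ← abs_neg]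
  unfold FareyNeighbor at h; convert h using 2; ring

lemma fareyNeighbor_antimediant_right (h : FareyNeighbor x y) :
    FareyNeighbor y (antimediant x y) := by
  rw [antimediant, fareyNeighbor_mkFarey_iff (isCoprime_sub_of_fareyNeighbor h), ← abs_neg]
  unfold FareyNeighbor at h; convert h using 2; ring

/-- Cramer's rule: a common neighbour `p/q` of `a/b` and `c/d` has `(p, q) = ±(a, b) ± (c, d)`. -/
lemma eq_mediant_or_eq_antimediant {z : FareyVertex} (hxy : FareyNeighbor x y)
    (hxz : FareyNeighbor x z) (hyz : FareyNeighbor y z) :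
    z = mediant x y ∨ z = antimediant x y := by
  unfold FareyNeighbor at hxy hxz hyz
  rw [← mkFarey_fnum_fden z, mediant, antimediant]
  generalize fnum x = a, fden x = b, fnum y = c, fden y = d, fnum z = p, fden z = q at *
  have hp : p * (a * d - b * c) = c * (a * q - b * p) - a * (c * q - d * p) := by ring
  have hq : q * (a * d - b * c) = d * (a * q - b * p) - b * (c * q - d * p) := by ring
  rcases abs_eq (zero_le_one' ℤ) |>.mp hxy with h | h <;>
    rcases abs_eq (zero_le_one' ℤ) |>.mp hxz with h₁ | h₁ <;>
    rcases abs_eq (zero_le_one' ℤ) |>.mp hyz with h₂ | h₂ <;>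
    rw [h, h₁, h₂] at hp hq <;>
    first
      | (left; congr 1 <;> omega)
      | (right; congr 1 <;> omega)
      | (left; rw [← mkFarey_neg]; congr 1 <;> omega)
      | (right; rw [← mkFarey_neg]; congr 1 <;> omega)

/-- Otherwise `|ad - bc| = |a|d + b|c| ≥ 2`. -/
lemma fnum_mul_fnum_nonneg (h : FareyNeighbor x y) (hx : 0 < fden x) (hy : 0 < fden y) :
    0 ≤ fnum x * fnum y := by
  unfold FareyNeighbor at h
  by_contra! hneg
  rw [abs_eq (zero_le_one' ℤ)] at h
  rcases mul_neg_iff.mp hneg with ⟨ha, hc⟩ | ⟨ha, hc⟩ <;> rcases h with h | h <;> nlinarith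

lemma vertexWeight_lt_max_mediant_antimediant (h : FareyNeighbor x y) :
    vertexWeight x < max (vertexWeight (mediant x y)) (vertexWeight (antimediant x y)) := by
  rw [mediant, antimediant, vertexWeight_mkFarey (isCoprime_add_of_fareyNeighbor h),
    vertexWeight_mkFarey (isCoprime_sub_of_fareyNeighbor h), vertexWeight]
  rcases (fden_nonneg x).eq_or_lt with hx | hx
  · obtain rfl := eq_none_of_fden_eq_zero hx.symm
    rw [FareyNeighbor, fnum_none, fden_none, abs_eq (zero_le_one' ℤ)] at h
    rw [fnum_none, fden_none]
    omega
  rcases (fden_nonneg y).eq_or_lt with hy | hy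
  · obtain rfl := eq_none_of_fden_eq_zero hy.symm
    rw [FareyNeighbor, fnum_none, fden_none, abs_eq (zero_le_one' ℤ)] at h
    rw [fnum_none, fden_none]
    omega
  have := mul_nonneg_iff.mp (fnum_mul_fnum_nonneg h hx hy)
  omega

lemma vertexWeight_antimediant_lt_mediant (h : FareyNeighbor x y) (hx : 0 < fden x)
    (hy : 0 < fden y) : vertexWeight (antimediant x y) < vertexWeight (mediant x y) := by
  rw [mediant, antimediant, vertexWeight_mkFarey (isCoprime_add_of_fareyNeighbor h),
    vertexWeight_mkFarey (isCoprime_sub_of_fareyNeighbor h)]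
  have := mul_nonneg_iff.mp (fnum_mul_fnum_nonneg h hx hy)
  omega

end

namespace FareyTriangle

def ofNeighbors (x y z : FareyVertex) (hxy : FareyNeighbor x y) (hxz : FareyNeighbor x z)
    (hyz : FareyNeighbor y z) : FareyTriangle where
  verts := {x, y, z}
  card_eq := Finset.card_triple_eq_three_iff.mpr ⟨hxy.ne, hxz.ne, hyz.ne⟩
  neighbors := by
    simp only [Finset.mem_insert, Finset.mem_singleton]
    rintro u (rfl | rfl | rfl) v (rfl | rfl | rfl) huv <;>
      first | exact absurd rfl huv | assumption | exact neighbor_symm ‹_›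

def weight (T : FareyTriangle) : ℕ := ∑ v ∈ T.verts, vertexWeight v

variable {T T' : FareyTriangle} {x y z : FareyVertex}

lemma weight_eq_of_verts_eq (hT : T.verts = {x, y, z}) :
    T.weight = vertexWeight x + vertexWeight y + vertexWeight z := by
  obtain ⟨hxy, hxz, hyz⟩ := Finset.card_triple_eq_three_iff.mp (hT ▸ T.card_eq)
  rw [weight, hT, Finset.sum_insert (by simp [hxy, hxz]), Finset.sum_pair hyz, add_assoc]

lemma weight_stdTriangle (i : ℤ) : (stdTriangle i).weight = i.natAbs + (i + 1).natAbs + 3 := by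
  rw [weight_eq_of_verts_eq rfl]
  simp only [vertexWeight, fnum, fden, Rat.num_intCast, Rat.den_intCast]
  omega

lemma eq_mediant_or_eq_antimediant_of_mem (hx : x ∈ T.verts) (hy : y ∈ T.verts)
    (hz : z ∈ T.verts) (hxy : x ≠ y) (hxz : x ≠ z) (hyz : y ≠ z) :
    z = mediant x y ∨ z = antimediant x y :=
  eq_mediant_or_eq_antimediant (T.neighbors x hx y hy hxy) (T.neighbors x hx z hz hxz)
    (T.neighbors y hy z hz hyz)

lemma exists_verts_eq_of_mem (hz : z ∈ T.verts) : ∃ x y, FareyNeighbor x y ∧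
    T.verts = {z, x, y} ∧ (z = mediant x y ∨ z = antimediant x y) := by
  obtain ⟨x, y, hxy, he⟩ := Finset.card_eq_two.mp <| show (T.verts.erase z).card = 2 by
    rw [Finset.card_erase_of_mem hz, T.card_eq]
  have hx : x ∈ T.verts.erase z := by simp [he]
  have hy : y ∈ T.verts.erase z := by simp [he]
  rw [Finset.mem_erase] at hx hy
  refine ⟨x, y, T.neighbors x hx.2 y hy.2 hxy, by rw [← he, Finset.insert_erase hz], ?_⟩
  exact eq_mediant_or_eq_antimediant_of_mem hx.2 hy.2 hz hxy hx.1 hy.1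

lemma exists_eq_stdTriangle_of_none_mem (h : none ∈ T.verts) : ∃ i, T = stdTriangle i := by
  obtain ⟨u, v, huv, hT, -⟩ := exists_verts_eq_of_mem h
  obtain ⟨hu, hv, -⟩ := Finset.card_triple_eq_three_iff.mp (hT ▸ T.card_eq)
  obtain ⟨m, rfl⟩ :=
    exists_eq_intCast_of_fareyNeighbor_none (T.neighbors u (by simp [hT]) none h hu.symm)
  obtain ⟨n, rfl⟩ :=
    exists_eq_intCast_of_fareyNeighbor_none (T.neighbors v (by simp [hT]) none h hv.symm)
  rcases abs_eq (zero_le_one' ℤ) |>.mp (fareyNeighbor_intCast_iff.mp huv) with hmn | hmn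
  · obtain rfl : m = n + 1 := by omega
    exact ⟨n, FareyTriangle.ext <| by
      rw [hT]; ext; simp only [stdTriangle, Finset.mem_insert, Finset.mem_singleton]; tauto⟩
  · obtain rfl : n = m + 1 := by omega
    exact ⟨m, FareyTriangle.ext <| by
      rw [hT]; ext; simp only [stdTriangle, Finset.mem_insert, Finset.mem_singleton]; tauto⟩

/-- In a triangle `{x, y, z}` with `z = ±(x - y)`, `x` or `y` is the mediant of the other two. -/
lemma exists_verts_eq_mediant_of_none_notMem (h : none ∉ T.verts) :
    ∃ x y, FareyNeighbor x y ∧ 0 < fden x ∧ 0 < fden y ∧ T.verts = {x, y, mediant x y} := by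
  obtain ⟨x, y, z, hxy, hxz, hyz, hT⟩ := Finset.card_eq_three.mp T.card_eq
  have hx : x ∈ T.verts := by simp [hT]
  have hy : y ∈ T.verts := by simp [hT]
  have hz : z ∈ T.verts := by simp [hT]
  have pos : ∀ v ∈ T.verts, 0 < fden v := fun v hv =>
    fden_pos_of_ne_none fun hvn => h (hvn ▸ hv)
  have hnxy := T.neighbors x hx y hy hxy
  rcases eq_mediant_or_eq_antimediant_of_mem hx hy hz hxy hxz hyz with rfl | rfl
  · exact ⟨x, y, hnxy, pos x hx, pos y hy, hT⟩
  have hpz := pos _ hz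
  rcases fnum_fden_mkFarey (isCoprime_sub_of_fareyNeighbor hnxy) with ⟨hp, hq⟩ | ⟨hp, hq⟩
  · refine ⟨antimediant x y, y, neighbor_symm (T.neighbors y hy _ hz hyz), hpz, pos y hy, ?_⟩
    have hmed : mediant (antimediant x y) y = x := by
      rw [mediant, antimediant, hp, hq, sub_add_cancel, sub_add_cancel, mkFarey_fnum_fden]
    rw [hT, hmed]; ext; simp only [Finset.mem_insert, Finset.mem_singleton]; tauto
  · refine ⟨antimediant x y, x, neighbor_symm (T.neighbors x hx _ hz hxz), hpz, pos x hx, ?_⟩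
    have hmed : mediant (antimediant x y) x = y := by
      rw [mediant, antimediant, hp, hq, neg_sub, neg_sub, sub_add_cancel, sub_add_cancel,
        mkFarey_fnum_fden]
    rw [hT, hmed]; ext; simp only [Finset.mem_insert, Finset.mem_singleton]; tauto

lemma fareyTree_adj_of_verts {w : FareyVertex} (hT : T.verts = {x, y, z})
    (hT' : T'.verts = {x, y, w}) (hzw : z ≠ w) : fareyTree.Adj T T' := by
  obtain ⟨hxy, hxz, hyz⟩ := Finset.card_triple_eq_three_iff.mp (hT ▸ T.card_eq)
  obtain ⟨-, hxw, hyw⟩ := Finset.card_triple_eq_three_iff.mp (hT' ▸ T'.card_eq)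
  change (T.verts ∩ T'.verts).card = 2
  have : T.verts ∩ T'.verts = {x, y} := by
    rw [hT, hT']; ext v; simp only [Finset.mem_inter, Finset.mem_insert, Finset.mem_singleton]
    grind
  rw [this, Finset.card_pair hxy]

lemma fareyTree_adj_stdTriangle_succ (i : ℤ) :
    fareyTree.Adj (stdTriangle i) (stdTriangle (i + 1)) := by
  refine fareyTree_adj_of_verts (x := some ((i + 1 : ℤ) : ℚ)) (y := none) (z := some (i : ℚ))
    (w := some ((i + 1 + 1 : ℤ) : ℚ)) ?_ ?_
    (by simp only [ne_eq, Option.some.injEq, Int.cast_inj]; omega)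
  all_goals ext; simp only [stdTriangle, Finset.mem_insert, Finset.mem_singleton]; tauto

lemma exists_mem_notMem_of_adj (h : fareyTree.Adj T T') : ∃ z ∈ T.verts, z ∉ T'.verts := by
  by_contra! hsub
  have hcard : (T.verts ∩ T'.verts).card = 2 := h
  rw [Finset.inter_eq_left.mpr fun z hz => hsub z hz, T.card_eq] at hcard
  omega

lemma exists_verts_eq_insert_erase_of_adj (h : fareyTree.Adj T T') (hz : z ∈ T.verts)
    (hz' : z ∉ T'.verts) : ∃ w ∉ T.verts, T'.verts = insert w (T.verts.erase z) := by
  have hcard : (T.verts ∩ T'.verts).card = 2 := h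
  have hinter : T'.verts ∩ T.verts = T.verts.erase z := by
    rw [Finset.inter_comm]
    refine Finset.eq_of_subset_of_card_le (fun v hv => ?_) ?_
    · rw [Finset.mem_inter] at hv
      exact Finset.mem_erase.mpr ⟨fun hvz => hz' (hvz ▸ hv.2), hv.1⟩
    · rw [Finset.card_erase_of_mem hz, T.card_eq, hcard]
  obtain ⟨w, hw⟩ := Finset.card_eq_one.mp <| show (T'.verts \ T.verts).card = 1 by
    rw [Finset.card_sdiff, hcard, T'.card_eq]
  refine ⟨w, (Finset.mem_sdiff.mp (hw ▸ Finset.mem_singleton_self w)).2, ?_⟩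
  calc T'.verts = (T'.verts \ T.verts) ∪ (T'.verts ∩ T.verts) :=
        (Finset.sdiff_union_inter _ _).symm
    _ = insert w (T.verts.erase z) := by rw [hw, hinter, Finset.insert_eq]

lemma exists_flip_of_adj (h : fareyTree.Adj T T') (hT : T.verts = {z, x, y})
    (hz' : z ∉ T'.verts) : ∃ w, w ≠ z ∧ T'.verts = {w, x, y} ∧
      (w = mediant x y ∨ w = antimediant x y) := by
  have hz : z ∈ T.verts := by simp [hT]
  obtain ⟨hzx, hzy, hxy⟩ := Finset.card_triple_eq_three_iff.mp (hT ▸ T.card_eq)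
  obtain ⟨w, hw, hT'⟩ := exists_verts_eq_insert_erase_of_adj h hz hz'
  rw [hT, Finset.erase_insert (by simp [hzx, hzy])] at hT'
  obtain ⟨hwx, hwy, -⟩ := Finset.card_triple_eq_three_iff.mp (hT' ▸ T'.card_eq)
  refine ⟨w, fun hwz => hw (hwz ▸ hz), hT', ?_⟩
  exact eq_mediant_or_eq_antimediant_of_mem (T := T') (by simp [hT']) (by simp [hT'])
    (by simp [hT']) hxy hwx.symm hwy.symm

lemma eq_of_adj_of_notMem {T₁ T₂ : FareyTriangle} (h₁ : fareyTree.Adj T T₁)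
    (h₂ : fareyTree.Adj T T₂) (hz : z ∈ T.verts) (hz₁ : z ∉ T₁.verts) (hz₂ : z ∉ T₂.verts) :
    T₁ = T₂ := by
  obtain ⟨x, y, -, hT, hzxy⟩ := exists_verts_eq_of_mem hz
  obtain ⟨w₁, hw₁z, hT₁, hw₁⟩ := exists_flip_of_adj h₁ hT hz₁
  obtain ⟨w₂, hw₂z, hT₂, hw₂⟩ := exists_flip_of_adj h₂ hT hz₂
  have : w₁ = w₂ := by grind
  exact FareyTriangle.ext (by rw [hT₁, hT₂, this])

lemma vertexWeight_lt_of_adj_of_weight_le (h : fareyTree.Adj T T') (hle : T'.weight ≤ T.weight)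
    (hz : z ∈ T.verts) (hz' : z ∉ T'.verts) {v : FareyVertex} (hv : v ∈ T.verts) (hvz : v ≠ z) :
    vertexWeight v < vertexWeight z := by
  obtain ⟨x, y, hxy, hT, hzxy⟩ := exists_verts_eq_of_mem hz
  obtain ⟨w, hwz, hT', hw⟩ := exists_flip_of_adj h hT hz'
  rw [weight_eq_of_verts_eq hT, weight_eq_of_verts_eq hT'] at hle
  have hmax : max (vertexWeight (mediant x y)) (vertexWeight (antimediant x y)) ≤
      vertexWeight z := by
    rcases hzxy with rfl | rfl <;> rcases hw with rfl | rfl <;> simp_all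
  have hx := vertexWeight_lt_max_mediant_antimediant hxy
  have hy := vertexWeight_lt_max_mediant_antimediant (neighbor_symm hxy)
  rw [mediant_comm, antimediant_comm] at hy
  rw [hT] at hv
  simp only [Finset.mem_insert, Finset.mem_singleton] at hv
  rcases hv with rfl | rfl | rfl
  · exact absurd rfl hvz
  · omega
  · omega

lemma eq_of_adj_of_weight_le {T₁ T₂ : FareyTriangle} (h₁ : fareyTree.Adj T T₁)
    (h₂ : fareyTree.Adj T T₂) (hle₁ : T₁.weight ≤ T.weight) (hle₂ : T₂.weight ≤ T.weight) :
    T₁ = T₂ := by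
  obtain ⟨z₁, hz₁, hz₁'⟩ := exists_mem_notMem_of_adj h₁
  obtain ⟨z₂, hz₂, hz₂'⟩ := exists_mem_notMem_of_adj h₂
  obtain rfl : z₁ = z₂ := by
    by_contra hne
    have := vertexWeight_lt_of_adj_of_weight_le h₁ hle₁ hz₁ hz₁' hz₂ (Ne.symm hne)
    have := vertexWeight_lt_of_adj_of_weight_le h₂ hle₂ hz₂ hz₂' hz₁ hne
    omega
  exact eq_of_adj_of_notMem h₁ h₂ hz₁ hz₁' hz₂'

lemma exists_adj_weight_lt (h₀ : T ≠ stdTriangle 0) (h₁ : T ≠ stdTriangle (-1)) :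
    ∃ T', fareyTree.Adj T T' ∧ T'.weight < T.weight := by
  by_cases hn : none ∈ T.verts
  · obtain ⟨i, rfl⟩ := exists_eq_stdTriangle_of_none_mem hn
    have hi : i ≠ 0 ∧ i ≠ -1 := ⟨fun h => h₀ (h ▸ rfl), fun h => h₁ (h ▸ rfl)⟩
    rcases le_or_gt 0 i with hi' | hi'
    · refine ⟨stdTriangle (i - 1), by simpa using (fareyTree_adj_stdTriangle_succ (i - 1)).symm, ?_⟩
      simp only [weight_stdTriangle]
      omega
    · refine ⟨stdTriangle (i + 1), fareyTree_adj_stdTriangle_succ i, ?_⟩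
      simp only [weight_stdTriangle]
      omega
  · obtain ⟨x, y, hxy, hx, hy, hT⟩ := exists_verts_eq_mediant_of_none_notMem hn
    have hlt := vertexWeight_antimediant_lt_mediant hxy hx hy
    let T' := ofNeighbors x y (antimediant x y) hxy (fareyNeighbor_antimediant_left hxy)
      (fareyNeighbor_antimediant_right hxy)
    refine ⟨T', fareyTree_adj_of_verts hT rfl fun he => hlt.ne (he ▸ rfl), ?_⟩
    rw [weight_eq_of_verts_eq hT, weight_eq_of_verts_eq (T := T') rfl]
    omega

lemma reachable_stdTriangle_zero (T : FareyTriangle) :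
    fareyTree.Reachable T (stdTriangle 0) := by
  refine fareyTree.reachable_of_forall_reachable_or_exists_adj_lt weight _ (fun T => ?_) T
  by_cases h₀ : T = stdTriangle 0
  · exact Or.inl (h₀ ▸ .rfl)
  by_cases h₁ : T = stdTriangle (-1)
  · have hadj : fareyTree.Adj (stdTriangle (-1)) (stdTriangle 0) := by
      simpa using fareyTree_adj_stdTriangle_succ (-1)
    exact Or.inl (h₁ ▸ hadj.reachable)
  exact Or.inr (exists_adj_weight_lt h₀ h₁)

end FareyTriangle

theorem fareyTree_isTree :
    fareyTree.Connected ∧ fareyTree.IsAcyclic ∧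
      ∀ T T' : FareyTriangle, ∃! p : fareyTree.Walk T T', p.IsPath := by
  have hconn : fareyTree.Connected := fareyTree.connected_iff_exists_forall_reachable.mpr
    ⟨stdTriangle 0, fun T => (FareyTriangle.reachable_stdTriangle_zero T).symm⟩
  have hacyc : fareyTree.IsAcyclic := fareyTree.isAcyclic_of_unique_adj_le
    FareyTriangle.weight fun _ _ _ => FareyTriangle.eq_of_adj_of_weight_le
  exact ⟨hconn, hacyc, SimpleGraph.IsTree.existsUnique_path ⟨hconn, hacyc⟩⟩
end

section
/- For every integer i ≥ 0, the distance in the Farey tree Σ between the triangles △^{(i)} and △^{(0)} equals i, i.e. d(△^{(i)}, △^{(0)}) = i. -/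
/-!
Every Farey triangle has a finite vertex, and any two of its finite vertices differ by at most `1`,
since `|a/b - c/d| = 1/(bd)` for Farey neighbours. Hence the ceiling of the smallest finite vertex,
the *level* of a triangle, changes by at most `1` along an edge of `Σ`: adjacent triangles share a
finite vertex `t`, and both levels lie in `{⌈t⌉ - 1, ⌈t⌉}`. As `△⁽ⁱ⁾` has level `i`, this gives
`d(△⁽ⁱ⁾, △⁽⁰⁾) ≥ i`, and the chain `△⁽ⁱ⁾, △⁽ⁱ⁻¹⁾, …, △⁽⁰⁾` gives the reverse inequality.
-/

namespace SimpleGraph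

variable {V : Type*} {G : SimpleGraph V} {f : V → ℤ}

theorem Walk.abs_sub_le_length (hf : ∀ u v, G.Adj u v → |f u - f v| ≤ 1) {u v : V}
    (p : G.Walk u v) : |f u - f v| ≤ p.length := by
  induction p with
  | nil => simp
  | @cons u v w hadj p ih =>
    rw [length_cons, Nat.cast_succ]
    calc |f u - f w| ≤ |f u - f v| + |f v - f w| := abs_sub_le _ _ _
      _ ≤ p.length + 1 := by linarith [hf u v hadj]

theorem Reachable.abs_sub_le_dist (hf : ∀ u v, G.Adj u v → |f u - f v| ≤ 1) {u v : V}
    (h : G.Reachable u v) : |f u - f v| ≤ G.dist u v := by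
  obtain ⟨p, hp⟩ := h.exists_walk_length_eq_dist
  exact hp ▸ p.abs_sub_le_length hf

end SimpleGraph

theorem FareyNeighbor.abs_sub_le_one {r q : ℚ} (h : FareyNeighbor (some r) (some q)) :
    |r - q| ≤ 1 := by
  have hdet : |((r.num * q.den - r.den * q.num : ℤ) : ℚ)| = 1 := by
    exact_mod_cast (h : |r.num * (q.den : ℤ) - r.den * q.num| = 1)
  have hr : (1 : ℚ) ≤ r.den := by exact_mod_cast r.pos
  have hq : (1 : ℚ) ≤ q.den := by exact_mod_cast q.pos
  have hsub : r - q = ((r.num * q.den - r.den * q.num : ℤ) : ℚ) / (r.den * q.den) := by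
    conv_lhs => rw [← Rat.num_div_den r, ← Rat.num_div_den q]
    field_simp
    push_cast
    ring
  rw [hsub, abs_div, hdet, abs_of_pos (by positivity), div_le_one (by positivity)]
  nlinarith

theorem Finset.card_le_one_of_forall_some_notMem {α : Type*} {s : Finset (Option α)}
    (hs : ∀ a : α, some a ∉ s) : s.card ≤ 1 := by
  refine Finset.card_le_one.mpr fun x hx y hy => ?_
  cases x <;> cases y <;> simp_all

namespace FareyTriangle

noncomputable def finVerts (T : FareyTriangle) : Finset ℚ :=
  T.verts.preimage some (Option.some_injective ℚ).injOn

@[simp]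
theorem mem_finVerts {T : FareyTriangle} {q : ℚ} : q ∈ T.finVerts ↔ some q ∈ T.verts :=
  Finset.mem_preimage

theorem finVerts_nonempty (T : FareyTriangle) : T.finVerts.Nonempty := by
  by_contra h
  have := Finset.card_le_one_of_forall_some_notMem (s := T.verts) fun q hq =>
    h ⟨q, mem_finVerts.mpr hq⟩
  rw [T.card_eq] at this
  omega

theorem exists_finite_mem_inter_of_adj {T T' : FareyTriangle} (h : fareyTree.Adj T T') :
    ∃ t : ℚ, some t ∈ T.verts ∧ some t ∈ T'.verts := by
  by_contra! hno
  have := Finset.card_le_one_of_forall_some_notMem (s := T.verts ∩ T'.verts) fun q hq =>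
    hno q (Finset.mem_inter.mp hq).1 (Finset.mem_inter.mp hq).2
  rw [show (T.verts ∩ T'.verts).card = 2 from h] at this
  omega

noncomputable def level (T : FareyTriangle) : ℤ :=
  ⌈T.finVerts.min' T.finVerts_nonempty⌉

theorem level_mem_Icc {T : FareyTriangle} {t : ℚ} (ht : some t ∈ T.verts) :
    T.level ∈ Set.Icc (⌈t⌉ - 1) ⌈t⌉ := by
  have hmin_le : T.finVerts.min' T.finVerts_nonempty ≤ t :=
    Finset.min'_le _ _ (mem_finVerts.mpr ht)
  have le_min : t - 1 ≤ T.finVerts.min' T.finVerts_nonempty := by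
    refine Finset.le_min' _ _ _ fun q hq => ?_
    rcases eq_or_ne q t with rfl | hne
    · linarith
    · have := (T.neighbors _ ht _ (mem_finVerts.mp hq) (by simpa using hne.symm)).abs_sub_le_one
      linarith [(abs_le.mp this).2]
  refine ⟨?_, Int.ceil_mono hmin_le⟩
  have := Int.ceil_mono le_min
  rwa [Int.ceil_sub_one] at this

theorem abs_level_sub_le_one_of_adj {T T' : FareyTriangle} (h : fareyTree.Adj T T') :
    |T.level - T'.level| ≤ 1 := by
  obtain ⟨t, ht, ht'⟩ := exists_finite_mem_inter_of_adj h
  obtain ⟨h₁, h₂⟩ := level_mem_Icc ht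
  obtain ⟨h₃, h₄⟩ := level_mem_Icc ht'
  exact abs_le.mpr ⟨by omega, by omega⟩

end FareyTriangle

theorem finVerts_stdTriangle (i : ℤ) :
    (stdTriangle i).finVerts = {(i : ℚ), (i : ℚ) + 1} := by
  ext q
  simp [stdTriangle]

theorem level_stdTriangle (i : ℤ) : (stdTriangle i).level = i := by
  have hmin : (stdTriangle i).finVerts.min' (stdTriangle i).finVerts_nonempty = i := by
    simp only [finVerts_stdTriangle]
    exact le_antisymm (Finset.min'_le _ _ (by simp))
      (Finset.le_min' _ _ _ (by simp))
  rw [FareyTriangle.level, hmin, Int.ceil_intCast]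

theorem stdTriangle_adj_succ (i : ℤ) : fareyTree.Adj (stdTriangle (i + 1)) (stdTriangle i) := by
  have hinter : (stdTriangle (i + 1)).verts ∩ (stdTriangle i).verts
      = {some ((i : ℚ) + 1), none} := by
    ext v
    rcases v with _ | q
    · simp [stdTriangle]
    · simp only [stdTriangle, Finset.mem_inter, Finset.mem_insert, Finset.mem_singleton,
        Option.some.injEq, reduceCtorEq, or_false]
      push_cast
      constructor
      · rintro ⟨h₁ | h₁, h₂ | h₂⟩ <;> linarith
      · rintro rfl
        exact ⟨.inl rfl, .inr rfl⟩
  show ((stdTriangle (i + 1)).verts ∩ (stdTriangle i).verts).card = 2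
  rw [hinter, Finset.card_pair (by simp)]

theorem exists_walk_stdTriangle_length (i : ℕ) :
    ∃ p : fareyTree.Walk (stdTriangle i) (stdTriangle 0), p.length = i := by
  induction i with
  | zero => exact ⟨.nil, rfl⟩
  | succ n ih =>
    obtain ⟨p, hp⟩ := ih
    exact ⟨.cons (by exact_mod_cast stdTriangle_adj_succ n) p, by simp [hp]⟩

theorem dist_stdTriangle (i : ℕ) :
    fareyTree.dist (stdTriangle (i : ℤ)) (stdTriangle 0) = i := by
  obtain ⟨p, hp⟩ := exists_walk_stdTriangle_length i
  refine le_antisymm ((SimpleGraph.dist_le p).trans_eq hp) ?_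
  have := p.reachable.abs_sub_le_dist fun _ _ => FareyTriangle.abs_level_sub_le_one_of_adj
  simp only [level_stdTriangle, sub_zero, Nat.abs_cast] at this
  exact_mod_cast this
end

section
/- Let p and q be relatively prime integers with p ≥ 1, q ≥ 1, and p/q ≠ 1. Let △_m be the Farey triangle containing p/q that is closest in the Farey tree Σ to △^{(0)}. Then among the three triangles adjacent to △_m in Σ there is a unique one, △_V, that does not contain p/q as a vertex, and it satisfies d(△_V, △^{(0)}) = S(p,q) − 2. -/
/-!
Encode the Farey vertex `a/b` by the reduced vector `(a, b)` (with `∞ = (1, 0)`); Farey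
neighbours are then vectors with determinant `±1`. Every Farey triangle is `{X, Y, X + Y}` for
a pair with `det X Y = 1`, and the other triangle on the edge `{X, Y}` is `{X, Y, ±(X - Y)}`.
For neighbours `X`, `Y` in the first quadrant, `S (X + Y) = max (S X) (S Y) + 1`. Hence the
function `depth`, which is `S` of the mediant minus one on triangles in `[0, ∞]` (and is
mirrored on negative ones), changes by at most one along edges and drops by one from every
triangle other than `△⁽⁰⁾` to a neighbour: it is the distance to `△⁽⁰⁾`.

A triangle `△_m` containing `p/q` and closest to `△⁽⁰⁾` must have `p/q` as its mediant
(otherwise the neighbour across `{X, Y}` would be closer and still contain `p/q`), so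
`d(△_m, △⁽⁰⁾) = S(p, q) - 1`, and `△_V` is that neighbour, at distance `S(p, q) - 2`.
-/

lemma S_zero_right (p : ℕ) : S p 0 = 0 := by
  rw [S]; simp

lemma S_of_ne_zero (p : ℕ) {q : ℕ} (hq : q ≠ 0) : S p q = p / q + S q (p % q) := by
  rw [S]; simp [hq]

lemma S_comm (p q : ℕ) : S p q = S q p := by
  rcases lt_trichotomy p q with h | rfl | h
  · rw [S_of_ne_zero p (by omega), Nat.div_eq_of_lt h, Nat.mod_eq_of_lt h, zero_add]
  · rfl
  · rw [S_of_ne_zero q (by omega), Nat.div_eq_of_lt h, Nat.mod_eq_of_lt h, zero_add]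

lemma S_one_right (n : ℕ) : S n 1 = n := by
  rw [S_of_ne_zero n one_ne_zero, Nat.mod_one, S_zero_right, Nat.div_one, add_zero]

lemma S_add_self_left (p : ℕ) {q : ℕ} (hq : q ≠ 0) : S (p + q) q = S p q + 1 := by
  rw [S_of_ne_zero _ hq, S_of_ne_zero _ hq, Nat.add_div_right _ (Nat.pos_of_ne_zero hq),
    Nat.add_mod_right]
  omega

lemma S_add_self_right {p : ℕ} (hp : p ≠ 0) (q : ℕ) : S p (q + p) = S p q + 1 := by
  rw [S_comm, S_add_self_left _ hp, S_comm]

/-- Induction along the subtractive Euclidean algorithm, which maps the Farey neighbours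
`a/b > c/d` to a smaller pair of neighbours unless they straddle `1`. -/
theorem S_add_of_mul_eq {a b c d : ℕ} (h : a * d = b * c + 1) :
    S (a + c) (b + d) = max (S a b) (S c d) + 1 := by
  induction hn : a + b + c + d using Nat.strong_induction_on generalizing a b c d with
  | _ n ih =>
  subst hn
  rcases Nat.eq_zero_or_pos b with rfl | hb
  · obtain ⟨rfl, rfl⟩ : a = 1 ∧ d = 1 := mul_eq_one.mp (by simpa using h)
    simp [S_zero_right, S_one_right, add_comm]
  rcases Nat.eq_zero_or_pos c with rfl | hc
  · obtain ⟨rfl, rfl⟩ : a = 1 ∧ d = 1 := mul_eq_one.mp (by simpa using h)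
    rw [add_zero, S_add_self_right one_ne_zero, S_comm 1 b, S_one_right, S_comm 0 1,
      S_zero_right, Nat.max_zero]
  rcases le_or_gt b a with hba | hab <;> rcases le_or_gt d c with hdc | hcd
  · obtain ⟨a, rfl⟩ := Nat.exists_eq_add_of_le' hba
    obtain ⟨c, rfl⟩ := Nat.exists_eq_add_of_le' hdc
    have hd : d ≠ 0 := by rintro rfl; simp at h
    have h' : a * d = b * c + 1 := by nlinarith
    rw [show a + b + (c + d) = a + c + (b + d) by ring, S_add_self_left _ (by omega),
      S_add_self_left _ (by omega), S_add_self_left _ hd,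
      ih _ (by omega) h' rfl, max_add_add_right]
  · -- the neighbours straddle `1`, which forces `a/b = 1/1` and `c/d = c/(c+1)`
    obtain ⟨rfl, rfl⟩ : b = 1 ∧ a = 1 := by
      have : b * (c + 1) ≤ a * d := Nat.mul_le_mul hba hcd
      have hb1 : b = 1 := by nlinarith
      subst hb1
      exact ⟨rfl, by nlinarith⟩
    obtain rfl : d = c + 1 := by omega
    have hS : ∀ k, k ≠ 0 → S k (1 + k) = k + 1 := fun k hk => by
      rw [S_add_self_right hk, S_one_right]
    rw [show 1 + (c + 1) = 1 + (1 + c) by ring, hS _ (by omega), add_comm c 1, hS c (by omega),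
      show S 1 1 = 1 from S_one_right 1]
    omega
  · nlinarith [Nat.mul_le_mul hab.le hdc]
  · obtain ⟨b, rfl⟩ := Nat.exists_eq_add_of_le' hab.le
    obtain ⟨d, rfl⟩ := Nat.exists_eq_add_of_le' hcd.le
    have ha : a ≠ 0 := by rintro rfl; omega
    have h' : a * d = b * c + 1 := by nlinarith
    rw [show b + a + (d + c) = b + d + (a + c) by ring, S_add_self_right (by omega),
      S_add_self_right ha, S_add_self_right (by omega), ih _ (by omega) h' rfl,
      max_add_add_right]

namespace Farey

def det (X Y : ℤ × ℤ) : ℤ := X.1 * Y.2 - X.2 * Y.1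

lemma det_self (X : ℤ × ℤ) : det X X = 0 := by
  simp only [det]; ring

lemma det_comm (X Y : ℤ × ℤ) : det Y X = -det X Y := by
  simp only [det]; ring

lemma det_add_right (X Y Z : ℤ × ℤ) : det X (Y + Z) = det X Y + det X Z := by
  simp only [det, Prod.fst_add, Prod.snd_add]; ring

lemma det_sub_left (X Y Z : ℤ × ℤ) : det (X - Y) Z = det X Z - det Y Z := by
  simp only [det, Prod.fst_sub, Prod.snd_sub]; ring

lemma det_sub_right (X Y Z : ℤ × ℤ) : det X (Y - Z) = det X Y - det X Z := by
  simp only [det, Prod.fst_sub, Prod.snd_sub]; ring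

lemma det_mul_eq (X Y Z : ℤ × ℤ) :
    det X Y * Z.1 = det Z Y * X.1 + det X Z * Y.1 ∧
      det X Y * Z.2 = det Z Y * X.2 + det X Z * Y.2 := by
  constructor <;> simp only [det] <;> ring

/-- The pair `(a, b)` is the reduced form of a Farey vertex, `∞` being `(1, 0)`. -/
def IsReduced (X : ℤ × ℤ) : Prop := 0 ≤ X.2 ∧ IsCoprime X.1 X.2 ∧ (X.2 = 0 → X.1 = 1)

def vec (v : FareyVertex) : ℤ × ℤ := (fnum v, fden v)

def ofVec (X : ℤ × ℤ) : FareyVertex := mkFarey X.1 X.2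

lemma isReduced_vec (v : FareyVertex) : IsReduced (vec v) := by
  cases v with
  | none => exact ⟨le_rfl, isCoprime_one_left, fun _ => rfl⟩
  | some r =>
    refine ⟨by simp [vec, fden], ?_, fun h => absurd h (by simp [vec, fden])⟩
    rw [Int.isCoprime_iff_gcd_eq_one]
    exact r.reduced

lemma ofVec_vec (v : FareyVertex) : ofVec (vec v) = v := by
  cases v with
  | none => simp [ofVec, vec, mkFarey, fden]
  | some r => simp [ofVec, vec, mkFarey, fnum, fden, Rat.num_div_den]

lemma vec_ofVec {X : ℤ × ℤ} (hX : IsReduced X) : vec (ofVec X) = X := by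
  obtain ⟨h2, hcop, h0⟩ := hX
  rcases h2.eq_or_lt with h | h
  · obtain ⟨a, b⟩ := X
    obtain rfl : b = 0 := h.symm
    obtain rfl : a = 1 := h0 rfl
    simp [ofVec, vec, mkFarey, fnum, fden]
  · have hcop' : X.1.natAbs.Coprime X.2.natAbs := Int.isCoprime_iff_gcd_eq_one.mp hcop
    simp only [ofVec, mkFarey, h.ne', if_false, vec, fnum, fden]
    exact Prod.ext (Rat.num_div_eq_of_coprime h hcop') (Rat.den_div_eq_of_coprime h hcop')

lemma vec_some_div {p q : ℕ} (hq : 0 < q) (hpq : p.Coprime q) :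
    vec (some ((p : ℚ) / q)) = ((p : ℤ), (q : ℤ)) := by
  have hred : IsReduced ((p : ℤ), (q : ℤ)) :=
    ⟨by positivity, Int.isCoprime_iff_gcd_eq_one.mpr (by simpa using hpq), fun h => by omega⟩
  rw [← vec_ofVec hred]
  simp [ofVec, mkFarey, hq.ne']

lemma ofVec_inj {X Y : ℤ × ℤ} (hX : IsReduced X) (hY : IsReduced Y) :
    ofVec X = ofVec Y ↔ X = Y :=
  ⟨fun h => by rw [← vec_ofVec hX, ← vec_ofVec hY, h], congrArg ofVec⟩

lemma fnum_ofVec {X : ℤ × ℤ} (hX : IsReduced X) : fnum (ofVec X) = X.1 :=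
  congrArg Prod.fst (vec_ofVec hX)

lemma fden_ofVec {X : ℤ × ℤ} (hX : IsReduced X) : fden (ofVec X) = X.2 :=
  congrArg Prod.snd (vec_ofVec hX)

lemma fareyNeighbor_ofVec {X Y : ℤ × ℤ} (hX : IsReduced X) (hY : IsReduced Y) :
    FareyNeighbor (ofVec X) (ofVec Y) ↔ |det X Y| = 1 := by
  rw [FareyNeighbor, fnum_ofVec hX, fden_ofVec hX, fnum_ofVec hY, fden_ofVec hY, det]

lemma IsReduced.ne_zero {X : ℤ × ℤ} (hX : IsReduced X) : X ≠ 0 := by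
  rintro rfl
  simp [IsReduced] at hX

lemma isReduced_of_abs_det {W Z : ℤ × ℤ} (h : |det W Z| = 1) (h2 : 0 ≤ Z.2)
    (h0 : Z.2 = 0 → Z.1 = 1) : IsReduced Z := by
  refine ⟨h2, ?_, h0⟩
  rcases abs_eq (zero_le_one' ℤ) |>.mp h with h | h <;> simp only [det] at h
  · exact ⟨-W.2, W.1, by linarith⟩
  · exact ⟨W.2, -W.1, by linarith⟩

lemma snd_add_pos {X Y : ℤ × ℤ} (hX : IsReduced X) (hY : IsReduced Y) (h : det X Y = 1) :
    0 < X.2 + Y.2 := by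
  by_contra hc
  have hX0 : X.2 = 0 := by linarith [hX.1, hY.1]
  have hY0 : Y.2 = 0 := by linarith [hX.1, hY.1]
  simp [det, hX0, hY0] at h

lemma IsReduced.add {X Y : ℤ × ℤ} (hX : IsReduced X) (hY : IsReduced Y) (h : det X Y = 1) :
    IsReduced (X + Y) := by
  have hpos := snd_add_pos hX hY h
  refine isReduced_of_abs_det (W := X) ?_ (by simp; omega) (by simp; omega)
  rw [det_add_right, det_self, h]; simp

lemma isReduced_sub_of_snd_le {X Y : ℤ × ℤ} (hX : IsReduced X) (h : det X Y = 1)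
    (hle : Y.2 ≤ X.2) : IsReduced (X - Y) := by
  refine isReduced_of_abs_det (W := Y) ?_ (by simpa using hle) fun h0 => ?_
  · rw [det_sub_right, det_self, det_comm, h]; rfl
  · simp only [det, Prod.snd_sub, Prod.fst_sub] at h h0 ⊢
    have hm : X.2 * (X.1 - Y.1) = 1 := by
      rw [show Y.2 = X.2 by linarith] at h; linear_combination h
    rw [Int.eq_one_of_mul_eq_one_right hX.1 hm, one_mul] at hm
    exact hm

lemma isReduced_sub_of_snd_lt {X Y : ℤ × ℤ} (h : det X Y = 1) (hlt : X.2 < Y.2) :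
    IsReduced (Y - X) :=
  isReduced_of_abs_det (W := X) (by rw [det_sub_right, det_self, h]; rfl) (by simp; omega)
    (by simp; omega)

lemma ne_of_abs_det {X Y : ℤ × ℤ} (h : |det X Y| = 1) : X ≠ Y := by
  rintro rfl
  simp [det_self] at h

def triangleOfVec (X Y Z : ℤ × ℤ) (hX : IsReduced X) (hY : IsReduced Y) (hZ : IsReduced Z)
    (hXY : |det X Y| = 1) (hXZ : |det X Z| = 1) (hYZ : |det Y Z| = 1) : FareyTriangle where
  verts := {ofVec X, ofVec Y, ofVec Z}
  card_eq := Finset.card_eq_three.mpr ⟨_, _, _,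
    fun h => ne_of_abs_det hXY ((ofVec_inj hX hY).mp h),
    fun h => ne_of_abs_det hXZ ((ofVec_inj hX hZ).mp h),
    fun h => ne_of_abs_det hYZ ((ofVec_inj hY hZ).mp h), rfl⟩
  neighbors := by
    have nXY := (fareyNeighbor_ofVec hX hY).mpr hXY
    have nXZ := (fareyNeighbor_ofVec hX hZ).mpr hXZ
    have nYZ := (fareyNeighbor_ofVec hY hZ).mpr hYZ
    intro x hx y hy hxy
    simp only [Finset.mem_insert, Finset.mem_singleton] at hx hy
    rcases hx with rfl | rfl | rfl <;> rcases hy with rfl | rfl | rfl <;>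
      first
        | exact absurd rfl hxy
        | assumption
        | exact neighbor_symm nXY
        | exact neighbor_symm nXZ
        | exact neighbor_symm nYZ

lemma adj_of_mem {T T' : FareyTriangle} (hne : T ≠ T') {x y : FareyVertex} (hxy : x ≠ y)
    (hx : x ∈ T.verts) (hx' : x ∈ T'.verts) (hy : y ∈ T.verts) (hy' : y ∈ T'.verts) :
    fareyTree.Adj T T' := by
  change (T.verts ∩ T'.verts).card = 2
  have h2 : 2 ≤ (T.verts ∩ T'.verts).card := by
    rw [← Finset.card_pair hxy]
    refine Finset.card_le_card fun v hv => ?_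
    simp only [Finset.mem_insert, Finset.mem_singleton] at hv
    rcases hv with rfl | rfl <;> exact Finset.mem_inter.mpr ⟨‹_›, ‹_›⟩
  have h3 : (T.verts ∩ T'.verts).card ≠ 3 := fun h3 => hne <| FareyTriangle.ext <| by
    have e : T.verts ∩ T'.verts = T.verts :=
      Finset.eq_of_subset_of_card_le Finset.inter_subset_left (by rw [h3, T.card_eq])
    have e' : T.verts ∩ T'.verts = T'.verts :=
      Finset.eq_of_subset_of_card_le Finset.inter_subset_right (by rw [h3, T'.card_eq])
    rw [← e, e']
  have h4 : (T.verts ∩ T'.verts).card ≤ 3 :=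
    (Finset.card_le_card Finset.inter_subset_left).trans T.card_eq.le
  omega

/-- An oriented edge of the Farey graph. -/
structure UnimodularPair where
  X : ℤ × ℤ
  Y : ℤ × ℤ
  isReduced_X : IsReduced X
  isReduced_Y : IsReduced Y
  det_eq_one : det X Y = 1

namespace UnimodularPair

variable (B : UnimodularPair)

lemma isReduced_add : IsReduced (B.X + B.Y) :=
  B.isReduced_X.add B.isReduced_Y B.det_eq_one

lemma ofVec_X_ne_ofVec_Y : ofVec B.X ≠ ofVec B.Y := fun h =>
  ne_of_abs_det (by rw [B.det_eq_one]; rfl) ((ofVec_inj B.isReduced_X B.isReduced_Y).mp h)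

def triangle : FareyTriangle :=
  triangleOfVec B.X B.Y (B.X + B.Y) B.isReduced_X B.isReduced_Y B.isReduced_add
    (by rw [B.det_eq_one]; rfl) (by rw [det_add_right, det_self, B.det_eq_one]; rfl)
    (by rw [det_add_right, det_self, det_comm, B.det_eq_one]; rfl)

lemma triangle_verts : B.triangle.verts = {ofVec B.X, ofVec B.Y, ofVec (B.X + B.Y)} := rfl

/-- The vertex across the edge `{X, Y}` from the mediant `X + Y`. -/
def opp : ℤ × ℤ := if B.Y.2 ≤ B.X.2 then B.X - B.Y else B.Y - B.X

/-- The pair spanning the other triangle on the edge `{X, Y}`. For a triangle in `[0, ∞]`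
other than `△⁽⁰⁾` this is its neighbour one step closer to `△⁽⁰⁾`. -/
def parent : UnimodularPair :=
  if h : B.Y.2 ≤ B.X.2 then
    ⟨B.X - B.Y, B.Y, isReduced_sub_of_snd_le B.isReduced_X B.det_eq_one h, B.isReduced_Y,
      by rw [det_sub_left, det_self, sub_zero, B.det_eq_one]⟩
  else
    ⟨B.X, B.Y - B.X, B.isReduced_X, isReduced_sub_of_snd_lt B.det_eq_one (not_le.mp h),
      by rw [det_sub_right, det_self, sub_zero, B.det_eq_one]⟩

lemma parent_add_eq :
    (B.parent.X + B.parent.Y = B.X ∧ B.parent.Y = B.Y) ∨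
      (B.parent.X = B.X ∧ B.parent.X + B.parent.Y = B.Y) := by
  unfold parent
  split_ifs
  · exact Or.inl ⟨sub_add_cancel _ _, rfl⟩
  · exact Or.inr ⟨rfl, add_sub_cancel _ _⟩

lemma parent_triangle_verts :
    B.parent.triangle.verts = {ofVec B.X, ofVec B.Y, ofVec B.opp} := by
  unfold parent opp
  split_ifs <;> simp only [triangle_verts, sub_add_cancel, add_sub_cancel] <;> ext <;> simp <;>
    tauto

lemma add_ne_opp : B.X + B.Y ≠ B.opp := by
  have hX := B.isReduced_X.ne_zero
  have hY := B.isReduced_Y.ne_zero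
  unfold opp
  split_ifs <;> intro h <;> simp only [Prod.ext_iff, Prod.fst_add, Prod.snd_add, Prod.fst_sub,
    Prod.snd_sub] at h
  · exact hY (Prod.ext (by simp; omega) (by simp; omega))
  · exact hX (Prod.ext (by simp; omega) (by simp; omega))

lemma isReduced_opp : IsReduced B.opp := by
  unfold opp
  split_ifs with h
  exacts [isReduced_sub_of_snd_le B.isReduced_X B.det_eq_one h,
    isReduced_sub_of_snd_lt B.det_eq_one (not_le.mp h)]

lemma ofVec_add_notMem_parent : ofVec (B.X + B.Y) ∉ B.parent.triangle.verts := by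
  rw [parent_triangle_verts]
  simp only [Finset.mem_insert, Finset.mem_singleton, ofVec_inj B.isReduced_add B.isReduced_X,
    ofVec_inj B.isReduced_add B.isReduced_Y, ofVec_inj B.isReduced_add B.isReduced_opp,
    add_eq_left, add_eq_right, B.isReduced_X.ne_zero, B.isReduced_Y.ne_zero, B.add_ne_opp,
    or_self, not_false_eq_true]

lemma adj_parent : fareyTree.Adj B.triangle B.parent.triangle := by
  refine adj_of_mem (fun h => B.ofVec_add_notMem_parent ?_) B.ofVec_X_ne_ofVec_Y
    (x := ofVec B.X) (y := ofVec B.Y) ?_ ?_ ?_ ?_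
  · rw [← h, triangle_verts]; simp
  all_goals first
    | rw [parent_triangle_verts]; simp
    | rw [triangle_verts]; simp

/-- Cramer's rule writes `Z` as `±X ± Y`; reducedness fixes the signs. -/
lemma eq_add_or_eq_opp {Z : ℤ × ℤ} (hZ : IsReduced Z) (hXZ : |det B.X Z| = 1)
    (hYZ : |det B.Y Z| = 1) : Z = B.X + B.Y ∨ Z = B.opp := by
  have hX := B.isReduced_X
  have hY := B.isReduced_Y
  have hd := B.det_eq_one
  have hpos := snd_add_pos hX hY hd
  obtain ⟨e1, e2⟩ := det_mul_eq B.X B.Y Z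
  rw [hd, one_mul, det_comm B.Y Z] at e1 e2
  unfold opp
  rcases abs_eq (zero_le_one' ℤ) |>.mp hXZ with h1 | h1 <;>
    rcases abs_eq (zero_le_one' ℤ) |>.mp hYZ with h2 | h2 <;>
    rw [h1, h2] at e1 e2 <;> split_ifs with h
  · -- `Z = Y - X` with `X.2 = Y.2` would force `det X Y = -X.2`
    have hZ1 := hZ.2.2 (by linarith [hZ.1])
    have hY2 : B.Y.2 = B.X.2 := by linarith [hZ.1]
    have hY1 : B.Y.1 = B.X.1 + 1 := by linarith
    simp only [det, hY1, hY2] at hd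
    linarith [hX.1]
  · exact Or.inr (Prod.ext (by simp; linarith) (by simp; linarith))
  · exact Or.inl (Prod.ext (by simp; linarith) (by simp; linarith))
  · exact Or.inl (Prod.ext (by simp; linarith) (by simp; linarith))
  · linarith [hZ.1]
  · linarith [hZ.1]
  · exact Or.inr (Prod.ext (by simp; linarith) (by simp; linarith))
  · linarith [hZ.1]

lemma eq_triangle_or_eq_parent_triangle {T : FareyTriangle} (hX : ofVec B.X ∈ T.verts)
    (hY : ofVec B.Y ∈ T.verts) : T = B.triangle ∨ T = B.parent.triangle := by
  have hXY := B.ofVec_X_ne_ofVec_Y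
  have hsub : {ofVec B.X, ofVec B.Y} ⊆ T.verts := by
    intro v hv
    simp only [Finset.mem_insert, Finset.mem_singleton] at hv
    rcases hv with rfl | rfl <;> assumption
  obtain ⟨z, hzT, hz⟩ := Finset.exists_of_ssubset <| Finset.ssubset_iff_subset_ne.mpr
    ⟨hsub, fun h => by simpa [← h, Finset.card_pair hXY] using T.card_eq⟩
  simp only [Finset.mem_insert, Finset.mem_singleton, not_or] at hz
  have hT : T.verts = {ofVec B.X, ofVec B.Y, z} := by
    refine (Finset.eq_of_subset_of_card_le ?_ ?_).symm
    · intro v hv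
      simp only [Finset.mem_insert, Finset.mem_singleton] at hv
      rcases hv with rfl | rfl | rfl <;> assumption
    · rw [T.card_eq, Finset.card_eq_three.mpr ⟨_, _, _, hXY, Ne.symm hz.1, Ne.symm hz.2, rfl⟩]
  have nX := T.neighbors _ hX _ hzT (Ne.symm hz.1)
  have nY := T.neighbors _ hY _ hzT (Ne.symm hz.2)
  rw [← ofVec_vec z, fareyNeighbor_ofVec B.isReduced_X (isReduced_vec z)] at nX
  rw [← ofVec_vec z, fareyNeighbor_ofVec B.isReduced_Y (isReduced_vec z)] at nY
  rcases B.eq_add_or_eq_opp (isReduced_vec z) nX nY with h | h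
  · exact Or.inl (FareyTriangle.ext (by rw [hT, triangle_verts, ← h, ofVec_vec]))
  · exact Or.inr (FareyTriangle.ext (by rw [hT, parent_triangle_verts, ← h, ofVec_vec]))

lemma eq_parent_triangle_of_adj {T : FareyTriangle} (h : fareyTree.Adj B.triangle T)
    (hT : ofVec (B.X + B.Y) ∉ T.verts) : T = B.parent.triangle := by
  have hsub : B.triangle.verts ∩ T.verts ⊆ {ofVec B.X, ofVec B.Y} := fun v hv => by
    rw [Finset.mem_inter, triangle_verts] at hv
    simp only [Finset.mem_insert, Finset.mem_singleton] at hv ⊢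
    rcases hv with ⟨rfl | rfl | rfl, hvT⟩
    exacts [Or.inl rfl, Or.inr rfl, absurd hvT hT]
  have heq := Finset.eq_of_subset_of_card_le hsub
    (by rw [Finset.card_pair B.ofVec_X_ne_ofVec_Y]; exact (show (_ ∩ T.verts).card = 2 from h).ge)
  have hX : ofVec B.X ∈ B.triangle.verts ∩ T.verts := by simp [heq]
  have hY : ofVec B.Y ∈ B.triangle.verts ∩ T.verts := by simp [heq]
  refine (B.eq_triangle_or_eq_parent_triangle (Finset.mem_inter.mp hX).2
    (Finset.mem_inter.mp hY).2).resolve_left fun h => hT ?_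
  rw [h, triangle_verts]
  simp

end UnimodularPair

lemma exists_unimodularPair_of_neighbor {x y : FareyVertex} (h : FareyNeighbor x y) :
    ∃ B : UnimodularPair, ∀ T : FareyTriangle, x ∈ T.verts → y ∈ T.verts →
      T = B.triangle ∨ T = B.parent.triangle := by
  rcases abs_eq (zero_le_one' ℤ) |>.mp h with h | h
  · refine ⟨⟨vec x, vec y, isReduced_vec x, isReduced_vec y, h⟩, fun T hx hy => ?_⟩
    exact UnimodularPair.eq_triangle_or_eq_parent_triangle _ (by rwa [ofVec_vec])
      (by rwa [ofVec_vec])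
  · refine ⟨⟨vec y, vec x, isReduced_vec y, isReduced_vec x, ?_⟩, fun T hx hy => ?_⟩
    · rw [det_comm]; exact neg_eq_iff_eq_neg.mpr h
    exact UnimodularPair.eq_triangle_or_eq_parent_triangle _ (by rwa [ofVec_vec])
      (by rwa [ofVec_vec])

lemma exists_triangle_eq (T : FareyTriangle) : ∃ B : UnimodularPair, B.triangle = T := by
  obtain ⟨x, y, z, hxy, -, -, hT⟩ := Finset.card_eq_three.mp T.card_eq
  have hx : x ∈ T.verts := by simp [hT]
  have hy : y ∈ T.verts := by simp [hT]
  obtain ⟨B, hB⟩ := exists_unimodularPair_of_neighbor (T.neighbors x hx y hy hxy)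
  rcases hB T hx hy with rfl | rfl
  exacts [⟨B, rfl⟩, ⟨B.parent, rfl⟩]

lemma exists_unimodularPair_of_adj {T T' : FareyTriangle} (h : fareyTree.Adj T T') :
    ∃ B : UnimodularPair, (T = B.triangle ∧ T' = B.parent.triangle) ∨
      (T = B.parent.triangle ∧ T' = B.triangle) := by
  obtain ⟨x, y, hxy, hI⟩ := Finset.card_eq_two.mp (show (T.verts ∩ T'.verts).card = 2 from h)
  have hx : x ∈ T.verts ∩ T'.verts := by simp [hI]
  have hy : y ∈ T.verts ∩ T'.verts := by simp [hI]
  rw [Finset.mem_inter] at hx hy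
  obtain ⟨B, hB⟩ := exists_unimodularPair_of_neighbor (T.neighbors x hx.1 y hy.1 hxy)
  have hne := h.ne
  rcases hB T hx.1 hy.1 with rfl | rfl <;> rcases hB T' hx.2 hy.2 with rfl | rfl
  exacts [absurd rfl hne, ⟨B, Or.inl ⟨rfl, rfl⟩⟩, ⟨B, Or.inr ⟨rfl, rfl⟩⟩, absurd rfl hne]

def IsNeg (T : FareyTriangle) : Prop := ∃ v ∈ T.verts, fnum v < 0

/-- Farey neighbours cannot lie on opposite sides of `0`. -/
lemma not_isNeg_of_mem {T : FareyTriangle} {v : FareyVertex} (hv : v ∈ T.verts)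
    (h1 : 0 < fnum v) (h2 : 0 < fden v) : ¬ IsNeg T := by
  rintro ⟨u, hu, hneg⟩
  have hn := T.neighbors u hu v hv (by rintro rfl; omega)
  have hu2 : 0 < fden u := by
    cases u with
    | none => simp [fnum] at hneg
    | some r => simp [fden, r.pos]
  have : fnum u * fden v - fden u * fnum v ≤ -2 := by nlinarith
  rw [FareyNeighbor, abs_of_neg (by linarith)] at hn
  linarith

lemma eq_none_or_eq_zero_of_mem {T : FareyTriangle} (hT : IsNeg T) {v : FareyVertex}
    (hv : v ∈ T.verts) (h : 0 ≤ fnum v) : v = none ∨ v = some 0 := by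
  cases v with
  | none => exact Or.inl rfl
  | some r =>
    rcases h.eq_or_lt with h | h
    · exact Or.inr (by simpa [fnum, Rat.num_eq_zero] using h.symm)
    · exact absurd hT (not_isNeg_of_mem hv h (by simp [fden, r.pos]))

def reflectVertex (v : FareyVertex) : FareyVertex := v.map Neg.neg

lemma reflectVertex_involutive : Function.Involutive reflectVertex := by
  intro v; cases v <;> simp [reflectVertex]

lemma fareyNeighbor_reflectVertex {u v : FareyVertex} (h : FareyNeighbor u v) :
    FareyNeighbor (reflectVertex u) (reflectVertex v) := by
  cases u <;> cases v <;> simp_all [FareyNeighbor, reflectVertex, fnum, fden]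
  rw [← h, ← abs_neg]
  ring_nf

def reflect (T : FareyTriangle) : FareyTriangle where
  verts := T.verts.image reflectVertex
  card_eq := by rw [Finset.card_image_of_injective _ reflectVertex_involutive.injective, T.card_eq]
  neighbors := by
    simp only [Finset.mem_image]
    rintro _ ⟨x, hx, rfl⟩ _ ⟨y, hy, rfl⟩ hxy
    exact fareyNeighbor_reflectVertex (T.neighbors x hx y hy fun h => hxy (h ▸ rfl))

lemma mem_reflect_iff {T : FareyTriangle} {v : FareyVertex} :
    v ∈ (reflect T).verts ↔ reflectVertex v ∈ T.verts := by
  rw [reflect, Finset.mem_image]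
  exact ⟨by rintro ⟨u, hu, rfl⟩; rwa [reflectVertex_involutive],
    fun h => ⟨_, h, reflectVertex_involutive v⟩⟩

lemma reflect_reflect (T : FareyTriangle) : reflect (reflect T) = T :=
  FareyTriangle.ext (Finset.ext fun v => by
    rw [mem_reflect_iff, mem_reflect_iff, reflectVertex_involutive])

lemma adj_reflect {T T' : FareyTriangle} (h : fareyTree.Adj T T') :
    fareyTree.Adj (reflect T) (reflect T') := by
  change (T.verts.image reflectVertex ∩ T'.verts.image reflectVertex).card = 2
  rw [← Finset.image_inter _ _ reflectVertex_involutive.injective,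
    Finset.card_image_of_injective _ reflectVertex_involutive.injective]
  exact h

lemma not_isNeg_reflect {T : FareyTriangle} (hT : IsNeg T) : ¬ IsNeg (reflect T) := by
  rintro ⟨w, hw, hneg⟩
  rw [mem_reflect_iff] at hw
  cases w with
  | none => simp [fnum] at hneg
  | some r =>
    refine not_isNeg_of_mem hw ?_ ?_ hT <;>
      simp_all [reflectVertex, fnum, fden, r.pos]

def stdPair : UnimodularPair where
  X := (1, 0)
  Y := (0, 1)
  isReduced_X := ⟨le_rfl, isCoprime_one_left, fun _ => rfl⟩
  isReduced_Y := ⟨zero_le_one, isCoprime_one_right, fun h => absurd h one_ne_zero⟩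
  det_eq_one := by simp [det]

lemma ofVec_stdPair_X : ofVec stdPair.X = none := ofVec_vec none

lemma ofVec_stdPair_Y : ofVec stdPair.Y = some 0 := by
  simp [stdPair, ofVec, mkFarey]

lemma stdPair_triangle : stdPair.triangle = stdTriangle 0 := by
  ext v
  simp [UnimodularPair.triangle_verts, stdTriangle, stdPair, ofVec, mkFarey]
  tauto

lemma eq_stdTriangle_of_mem {T : FareyTriangle} (hT : ¬ IsNeg T) (hinf : none ∈ T.verts)
    (hzero : some 0 ∈ T.verts) : T = stdTriangle 0 := by
  rcases stdPair.eq_triangle_or_eq_parent_triangle (ofVec_stdPair_X ▸ hinf)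
    (ofVec_stdPair_Y ▸ hzero) with h | h
  · rw [h, stdPair_triangle]
  · refine absurd ⟨some (-1), ?_, by simp [fnum]⟩ hT
    rw [h, UnimodularPair.parent_triangle_verts]
    simp [UnimodularPair.opp, stdPair, ofVec, mkFarey]

def quotSum (X : ℤ × ℤ) : ℕ := S X.1.toNat X.2.toNat

lemma quotSum_add {X Y : ℤ × ℤ} (hX1 : 0 ≤ X.1) (hX2 : 0 ≤ X.2) (hY1 : 0 ≤ Y.1)
    (hY2 : 0 ≤ Y.2) (h : det X Y = 1) :
    quotSum (X + Y) = max (quotSum X) (quotSum Y) + 1 := by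
  obtain ⟨a, b⟩ := X
  obtain ⟨c, d⟩ := Y
  lift a to ℕ using hX1
  lift b to ℕ using hX2
  lift c to ℕ using hY1
  lift d to ℕ using hY2
  simp only [quotSum, det, Prod.mk_add_mk, ← Nat.cast_add, Int.toNat_natCast] at h ⊢
  exact S_add_of_mul_eq (by zify; linarith)

noncomputable def maxQuotSum (T : FareyTriangle) : ℕ := T.verts.sup fun v => quotSum (vec v)

open Classical in
/-- The distance to `△⁽⁰⁾` (`dist_stdTriangle_eq_depth`). On a triangle in `[0, ∞]`,
`maxQuotSum` is `S` of the mediant vertex; a triangle with a negative vertex is one step further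
from `△⁽⁰⁾` than its mirror image, since its paths to `△⁽⁰⁾` pass through `△⁽⁻¹⁾`. -/
noncomputable def depth (T : FareyTriangle) : ℕ :=
  if IsNeg T then maxQuotSum (reflect T) else maxQuotSum T - 1

namespace UnimodularPair

def Nonneg (B : UnimodularPair) : Prop := 0 ≤ B.X.1 ∧ 0 ≤ B.Y.1

variable {B : UnimodularPair}

lemma nonneg_of_not_isNeg (h : ¬ IsNeg B.triangle) : B.Nonneg := by
  constructor <;> by_contra hc
  · exact h ⟨ofVec B.X, by simp [triangle_verts], by rw [fnum_ofVec B.isReduced_X]; omega⟩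
  · exact h ⟨ofVec B.Y, by simp [triangle_verts], by rw [fnum_ofVec B.isReduced_Y]; omega⟩

lemma Nonneg.fst_add_pos (hB : B.Nonneg) : 0 < B.X.1 + B.Y.1 := by
  by_contra hc
  have h := B.det_eq_one
  have hX : B.X.1 = 0 := by linarith [hB.1, hB.2]
  have hY : B.Y.1 = 0 := by linarith [hB.1, hB.2]
  simp [det, hX, hY] at h

lemma Nonneg.not_isNeg (hB : B.Nonneg) : ¬ IsNeg B.triangle := by
  rintro ⟨v, hv, hneg⟩
  simp only [triangle_verts, Finset.mem_insert, Finset.mem_singleton] at hv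
  rcases hv with rfl | rfl | rfl
  · rw [fnum_ofVec B.isReduced_X] at hneg; linarith [hB.1]
  · rw [fnum_ofVec B.isReduced_Y] at hneg; linarith [hB.2]
  · rw [fnum_ofVec B.isReduced_add] at hneg; linarith [hB.fst_add_pos, Prod.fst_add B.X B.Y]

lemma Nonneg.isNeg_reflect (hB : B.Nonneg) : IsNeg (reflect B.triangle) := by
  refine ⟨reflectVertex (ofVec (B.X + B.Y)), mem_reflect_iff.mpr ?_, ?_⟩
  · rw [reflectVertex_involutive]; simp [triangle_verts]
  have h1 := fnum_ofVec B.isReduced_add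
  have h2 := fden_ofVec B.isReduced_add
  have hpos := snd_add_pos B.isReduced_X B.isReduced_Y B.det_eq_one
  have hpos' := hB.fst_add_pos
  cases hv : ofVec (B.X + B.Y) with
  | none => simp [hv, fden] at h2; linarith
  | some r =>
    simp only [hv, fnum, Prod.fst_add] at h1
    simp only [reflectVertex, Option.map_some, fnum, Rat.num_neg_eq_neg_num]
    linarith

lemma Nonneg.maxQuotSum_triangle (hB : B.Nonneg) :
    maxQuotSum B.triangle = max (quotSum B.X) (quotSum B.Y) + 1 := by
  have h := quotSum_add hB.1 B.isReduced_X.1 hB.2 B.isReduced_Y.1 B.det_eq_one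
  simp only [Farey.maxQuotSum, triangle_verts, Finset.sup_insert, Finset.sup_singleton,
    vec_ofVec B.isReduced_X, vec_ofVec B.isReduced_Y, vec_ofVec B.isReduced_add, h]
  omega

lemma Nonneg.depth_triangle (hB : B.Nonneg) :
    depth B.triangle = max (quotSum B.X) (quotSum B.Y) := by
  rw [Farey.depth, if_neg hB.not_isNeg, hB.maxQuotSum_triangle, Nat.add_sub_cancel]

lemma depth_triangle_eq_parent (hB : B.Nonneg) (hP : B.parent.Nonneg) :
    depth B.triangle = depth B.parent.triangle + 1 := by
  have h := quotSum_add hP.1 B.parent.isReduced_X.1 hP.2 B.parent.isReduced_Y.1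
    B.parent.det_eq_one
  rw [hB.depth_triangle, hP.depth_triangle]
  rcases B.parent_add_eq with ⟨hX, hY⟩ | ⟨hX, hY⟩
  · rw [← hX, ← hY, h]; omega
  · rw [← hX, ← hY, h]; omega

lemma Nonneg.parent (hB : B.Nonneg) (h0 : B.triangle ≠ stdTriangle 0) : B.parent.Nonneg := by
  have hd := B.det_eq_one
  have hX := B.isReduced_X
  have hY := B.isReduced_Y
  simp only [det] at hd
  unfold UnimodularPair.parent
  split_ifs with h
  · refine ⟨?_, hB.2⟩
    simp only [Prod.fst_sub, sub_nonneg]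
    by_contra hc
    have hs : (0 : ℤ) ≤ B.Y.1 - B.X.1 - 1 := by linarith [not_le.mp hc]
    nlinarith [mul_nonneg hB.1 (sub_nonneg.2 h), mul_nonneg hX.1 hs, hX.1]
  · refine ⟨hB.1, ?_⟩
    simp only [Prod.fst_sub, sub_nonneg]
    by_contra hc
    -- otherwise `1 = det X Y ≥ Y.1 + X.2 + 1`, so `X = ∞` and `Y = 0`
    have hs : (0 : ℤ) ≤ B.X.1 - B.Y.1 - 1 := by linarith [not_le.mp hc]
    have ht : (0 : ℤ) ≤ B.Y.2 - B.X.2 - 1 := by linarith [not_le.mp h]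
    have hsum : B.Y.1 + B.X.2 ≤ 0 := by
      nlinarith [mul_nonneg hB.2 ht, mul_nonneg hs hX.1, mul_nonneg hs ht]
    have hY1 : B.Y.1 = 0 := by linarith [hB.2, hX.1]
    have hX2 : B.X.2 = 0 := by linarith [hB.2, hX.1]
    have hX' : B.X = (1, 0) := Prod.ext (hX.2.2 hX2) hX2
    have hY2 : B.Y.2 = 1 := by
      have := isCoprime_zero_left.mp (hY1 ▸ hY.2.1)
      rcases Int.isUnit_iff.mp this with h | h <;> linarith
    apply h0
    rw [← stdPair_triangle]
    ext1
    rw [triangle_verts, triangle_verts, hX', (Prod.ext hY1 hY2 : B.Y = (0, 1))]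
    rfl

end UnimodularPair

lemma exists_nonneg_triangle_eq {T : FareyTriangle} (hT : ¬ IsNeg T) :
    ∃ B : UnimodularPair, B.Nonneg ∧ B.triangle = T := by
  obtain ⟨B, rfl⟩ := exists_triangle_eq T
  exact ⟨B, UnimodularPair.nonneg_of_not_isNeg hT, rfl⟩

lemma isNeg_reflect_of_not_isNeg {T : FareyTriangle} (hT : ¬ IsNeg T) : IsNeg (reflect T) := by
  obtain ⟨B, hB, rfl⟩ := exists_nonneg_triangle_eq hT
  exact hB.isNeg_reflect

lemma depth_of_isNeg {T : FareyTriangle} (hT : IsNeg T) : depth T = depth (reflect T) + 1 := by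
  obtain ⟨B, hB, hBT⟩ := exists_nonneg_triangle_eq (not_isNeg_reflect hT)
  rw [depth, if_pos hT, depth, if_neg (not_isNeg_reflect hT), ← hBT, hB.maxQuotSum_triangle,
    Nat.add_sub_cancel]

lemma depth_stdTriangle : depth (stdTriangle 0) = 0 := by
  have hB : stdPair.Nonneg := ⟨zero_le_one, le_rfl⟩
  rw [← stdPair_triangle, hB.depth_triangle]
  simp [quotSum, stdPair, S_zero_right, S_comm 0 1]

lemma depth_le_of_adj_of_not_isNeg {T T' : FareyTriangle} (h : fareyTree.Adj T T')
    (hT : ¬ IsNeg T) (hT' : ¬ IsNeg T') : depth T ≤ depth T' + 1 := by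
  obtain ⟨B, ⟨rfl, rfl⟩ | ⟨rfl, rfl⟩⟩ := exists_unimodularPair_of_adj h
  · rw [UnimodularPair.depth_triangle_eq_parent (UnimodularPair.nonneg_of_not_isNeg hT)
      (UnimodularPair.nonneg_of_not_isNeg hT')]
  · rw [UnimodularPair.depth_triangle_eq_parent (UnimodularPair.nonneg_of_not_isNeg hT')
      (UnimodularPair.nonneg_of_not_isNeg hT)]
    omega

/-- The only edge between triangles of different signs is the one from `△⁽⁰⁾` to `△⁽⁻¹⁾`. -/
lemma eq_stdTriangle_of_adj_of_isNeg {T T' : FareyTriangle} (h : fareyTree.Adj T T')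
    (hT : ¬ IsNeg T) (hT' : IsNeg T') :
    T = stdTriangle 0 ∧ reflect T' = stdTriangle 0 := by
  obtain ⟨x, y, hxy, hI⟩ := Finset.card_eq_two.mp (show (T.verts ∩ T'.verts).card = 2 from h)
  have hx : x ∈ T.verts ∩ T'.verts := by simp [hI]
  have hy : y ∈ T.verts ∩ T'.verts := by simp [hI]
  rw [Finset.mem_inter] at hx hy
  have hx0 := eq_none_or_eq_zero_of_mem hT' hx.2 (not_lt.mp fun h => hT ⟨x, hx.1, h⟩)
  have hy0 := eq_none_or_eq_zero_of_mem hT' hy.2 (not_lt.mp fun h => hT ⟨y, hy.1, h⟩)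
  have hmem : ∀ U : FareyTriangle, x ∈ U.verts → y ∈ U.verts →
      none ∈ U.verts ∧ some 0 ∈ U.verts := by
    rcases hx0 with rfl | rfl <;> rcases hy0 with rfl | rfl <;> first
      | exact absurd rfl hxy
      | exact fun U hx hy => ⟨hx, hy⟩
      | exact fun U hx hy => ⟨hy, hx⟩
  obtain ⟨hinf, hzero⟩ := hmem T hx.1 hy.1
  obtain ⟨hinf', hzero'⟩ := hmem T' hx.2 hy.2
  refine ⟨eq_stdTriangle_of_mem hT hinf hzero,
    eq_stdTriangle_of_mem (not_isNeg_reflect hT') (mem_reflect_iff.mpr hinf') ?_⟩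
  exact mem_reflect_iff.mpr (by simpa [reflectVertex] using hzero')

lemma depth_le_of_adj {T T' : FareyTriangle} (h : fareyTree.Adj T T') :
    depth T ≤ depth T' + 1 := by
  by_cases hT : IsNeg T <;> by_cases hT' : IsNeg T'
  · have := depth_le_of_adj_of_not_isNeg (adj_reflect h) (not_isNeg_reflect hT)
      (not_isNeg_reflect hT')
    rw [depth_of_isNeg hT, depth_of_isNeg hT']
    omega
  · obtain ⟨h1, h2⟩ := eq_stdTriangle_of_adj_of_isNeg h.symm hT' hT
    rw [depth_of_isNeg hT, h1, h2]
  · obtain ⟨h1, -⟩ := eq_stdTriangle_of_adj_of_isNeg h hT hT'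
    rw [h1, depth_stdTriangle]
    omega
  · exact depth_le_of_adj_of_not_isNeg h hT hT'

lemma exists_adj_depth_eq_of_not_isNeg {T : FareyTriangle} (hT : ¬ IsNeg T)
    (h0 : T ≠ stdTriangle 0) : ∃ P, fareyTree.Adj T P ∧ ¬ IsNeg P ∧ depth T = depth P + 1 := by
  obtain ⟨B, hB, rfl⟩ := exists_nonneg_triangle_eq hT
  have hP := hB.parent h0
  exact ⟨_, B.adj_parent, hP.not_isNeg, UnimodularPair.depth_triangle_eq_parent hB hP⟩

lemma exists_adj_depth_eq {T : FareyTriangle} (h0 : T ≠ stdTriangle 0) :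
    ∃ P, fareyTree.Adj T P ∧ depth T = depth P + 1 := by
  by_cases hT : IsNeg T
  · by_cases hR : reflect T = stdTriangle 0
    · -- `T = △⁽⁻¹⁾`
      refine ⟨stdTriangle 0, ?_, by rw [depth_of_isNeg hT, hR]⟩
      have hmem : ∀ v ∈ (stdTriangle 0).verts, reflectVertex v ∈ T.verts := fun v hv => by
        rw [← mem_reflect_iff, hR]; exact hv
      have hinf : ofVec stdPair.X ∈ T.verts := by
        rw [ofVec_stdPair_X]; exact hmem none (by simp [stdTriangle])
      have hzero : ofVec stdPair.Y ∈ T.verts := by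
        simpa [ofVec_stdPair_Y, reflectVertex] using hmem (some 0) (by simp [stdTriangle])
      rcases stdPair.eq_triangle_or_eq_parent_triangle hinf hzero with h | h
      · exact absurd (h.trans stdPair_triangle) h0
      · rw [h, ← stdPair_triangle]; exact stdPair.adj_parent.symm
    · obtain ⟨P, hadj, hP, hd⟩ := exists_adj_depth_eq_of_not_isNeg (not_isNeg_reflect hT) hR
      refine ⟨reflect P, by simpa [reflect_reflect] using adj_reflect hadj, ?_⟩
      rw [depth_of_isNeg hT, depth_of_isNeg (isNeg_reflect_of_not_isNeg hP), reflect_reflect, hd]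
  · obtain ⟨P, hadj, -, hd⟩ := exists_adj_depth_eq_of_not_isNeg hT h0
    exact ⟨P, hadj, hd⟩

lemma depth_le_length {T : FareyTriangle} (W : fareyTree.Walk T (stdTriangle 0)) :
    depth T ≤ W.length := by
  generalize hS : stdTriangle 0 = S at W
  induction W with
  | nil => rw [← hS, depth_stdTriangle]; rfl
  | cons h W ih =>
    rw [SimpleGraph.Walk.length_cons]
    exact (depth_le_of_adj h).trans (by have := ih hS; omega)

lemma exists_walk_length_eq_depth (T : FareyTriangle) :
    ∃ W : fareyTree.Walk T (stdTriangle 0), W.length = depth T := by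
  induction hn : depth T using Nat.strong_induction_on generalizing T with
  | _ n ih =>
  by_cases h0 : T = stdTriangle 0
  · subst h0
    exact ⟨.nil, by rw [← hn, depth_stdTriangle]; rfl⟩
  · obtain ⟨P, hadj, hd⟩ := exists_adj_depth_eq h0
    obtain ⟨W, hW⟩ := ih _ (by omega) P rfl
    exact ⟨.cons hadj W, by rw [SimpleGraph.Walk.length_cons, hW]; omega⟩

theorem dist_stdTriangle_eq_depth (T : FareyTriangle) :
    fareyTree.dist T (stdTriangle 0) = depth T := by
  obtain ⟨W, hW⟩ := exists_walk_length_eq_depth T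
  obtain ⟨W', hW'⟩ := W.reachable.exists_walk_length_eq_dist
  exact le_antisymm (hW ▸ SimpleGraph.dist_le W) (hW' ▸ depth_le_length W')

end Farey

open Farey in
theorem dist_triangle_V_eq_S_sub_two (p q : ℕ) (hp : 1 ≤ p) (hq : 1 ≤ q)
    (hpq : Nat.Coprime p q) (hne : (p : ℚ) / (q : ℚ) ≠ 1)
    (Tm : FareyTriangle) (hTm : some ((p : ℚ) / (q : ℚ)) ∈ Tm.verts)
    (hmin : ∀ T' : FareyTriangle, some ((p : ℚ) / (q : ℚ)) ∈ T'.verts →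
      fareyTree.dist Tm (stdTriangle 0) ≤ fareyTree.dist T' (stdTriangle 0)) :
    (∃! TV : FareyTriangle, fareyTree.Adj Tm TV ∧ some ((p : ℚ) / (q : ℚ)) ∉ TV.verts) ∧
    ∀ TV : FareyTriangle, fareyTree.Adj Tm TV → some ((p : ℚ) / (q : ℚ)) ∉ TV.verts →
      (fareyTree.dist TV (stdTriangle 0) : ℤ) = (S p q : ℤ) - 2 := by
  set v : FareyVertex := some ((p : ℚ) / (q : ℚ))
  have hvec : vec v = ((p : ℤ), (q : ℤ)) := vec_some_div hq hpq
  have hTm0 : Tm ≠ stdTriangle 0 := by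
    rintro rfl
    have hpq0 : (p : ℚ) / q ≠ 0 := by positivity
    simp [stdTriangle, v, hpq0, hne] at hTm
  have hpos : ¬ IsNeg Tm := not_isNeg_of_mem hTm
    (show 0 < (vec v).1 by rw [hvec]; simp; omega)
    (show 0 < (vec v).2 by rw [hvec]; simp; omega)
  obtain ⟨B, hB, rfl⟩ := exists_nonneg_triangle_eq hpos
  have hP := hB.parent hTm0
  have hdepth := UnimodularPair.depth_triangle_eq_parent hB hP
  have hvP : v ∉ B.parent.triangle.verts := fun h => by
    have := hmin _ h
    rw [dist_stdTriangle_eq_depth, dist_stdTriangle_eq_depth] at this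
    omega
  have hmed : v = ofVec (B.X + B.Y) := by
    rw [B.triangle_verts] at hTm
    rw [B.parent_triangle_verts] at hvP
    simp only [Finset.mem_insert, Finset.mem_singleton, not_or] at hTm hvP
    tauto
  have hS : S p q = depth B.triangle + 1 := by
    rw [hB.depth_triangle,
      ← quotSum_add hB.1 B.isReduced_X.1 hB.2 B.isReduced_Y.1 B.det_eq_one,
      ← vec_ofVec B.isReduced_add, ← hmed, hvec]
    simp [quotSum]
  refine ⟨⟨B.parent.triangle, ⟨B.adj_parent, hvP⟩,
    fun T hT => B.eq_parent_triangle_of_adj hT.1 (hmed ▸ hT.2)⟩, fun T hadj hvT => ?_⟩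
  rw [B.eq_parent_triangle_of_adj hadj (hmed ▸ hvT), dist_stdTriangle_eq_depth]
  omega
end
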